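/- arXiv:0811.3159 — 5 statements merged into one kernel-verified Lean document; each statement's English description precedes it below -/
import Mathlib

section
/- Let (w_i, W_i)_{i=1}^m be a fusion frame for ℂ^n with dim W_i = d_i, Σ_i w_i² d_i = 1, M = Σ_i d_i ≥ n, and frame operator Σ_i w_i² P_{W_i} = (1/n)·I_n (i.e., a tight fusion frame). If for some index i one has Σ_{k≠i} d_k ≤ n − 1, then w_i² = 1/n and P_{W_i} P_{W_j} = 0 for every j ≠ i. -/
/-! The projections `P k`, `k ≠ i₀`, have ranks summing to less than `n`, so some `x ≠ 0` lies in
all their kernels. The frame identity applied to `x` reads `w i₀² P i₀ x = x / n`, which forces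
`P i₀ x = x` and hence `w i₀² = 1 / n`. Compressing the frame identity by `P i₀` then leaves
`∑_{k ≠ i₀} w k² (P k P i₀)ᴴ (P k P i₀) = 0`, a positive combination of positive semidefinite
matrices, so every `P k P i₀`, and with it its adjoint `P i₀ P k`, vanishes. -/

open Matrix Module LinearMap Finset

theorem Matrix.trace_eq_rank_of_isIdempotentElem {K n : Type*} [Field K] [Fintype n]
    [DecidableEq n] {A : Matrix n n K} (hA : IsIdempotentElem A) : A.trace = A.rank := by
  have hA' : IsIdempotentElem A.mulVecLin := hA.map toLinAlgEquiv'
  rw [← trace_toLin'_eq, toLin'_apply', hA'.isProj_range.trace, rank]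

theorem LinearMap.finrank_le_finrank_biInf_ker_add_sum_finrank_range {K V W ι : Type*} [Field K]
    [AddCommGroup V] [Module K V] [FiniteDimensional K V] [AddCommGroup W] [Module K W]
    (f : ι → V →ₗ[K] W) (s : Finset ι) :
    finrank K V ≤ finrank K ↥(⨅ k ∈ s, ker (f k)) + ∑ k ∈ s, finrank K (range (f k)) := by
  classical
  induction s using Finset.induction_on with
  | empty =>
    rw [show ⨅ k ∈ (∅ : Finset ι), ker (f k) = ⊤ by simp, finrank_top]
    simp
  | @insert a s ha ih =>
    rw [sum_insert ha, Finset.iInf_insert]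
    have := Submodule.finrank_sup_add_finrank_inf_eq (ker (f a)) (⨅ k ∈ s, ker (f k))
    have := Submodule.finrank_le (ker (f a) ⊔ ⨅ k ∈ s, ker (f k))
    have := (f a).finrank_range_add_finrank_ker
    omega

theorem LinearMap.exists_ne_zero_forall_mem_apply_eq_zero {K V W ι : Type*} [Field K]
    [AddCommGroup V] [Module K V] [FiniteDimensional K V] [AddCommGroup W] [Module K W]
    (f : ι → V →ₗ[K] W) (s : Finset ι) (h : ∑ k ∈ s, finrank K (range (f k)) < finrank K V) :
    ∃ x ≠ 0, ∀ k ∈ s, f k x = 0 := by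
  have := finrank_le_finrank_biInf_ker_add_sum_finrank_range f s
  obtain ⟨x, hx, hx0⟩ := Submodule.exists_mem_ne_zero_of_ne_bot
    (Submodule.one_le_finrank_iff.mp (show 1 ≤ finrank K ↥(⨅ k ∈ s, ker (f k)) by omega))
  simp only [Submodule.mem_iInf, mem_ker] at hx
  exact ⟨x, hx0, hx⟩

section

variable {𝕜 n ι : Type*} [RCLike 𝕜] [Fintype n] {P : ι → Matrix n n 𝕜} {a : ι → ℝ}

open scoped ComplexOrder MatrixOrder in
theorem mul_eq_zero_of_sum_smul_mul_mul_eq_zero {Q : Matrix n n 𝕜} (hQ : Q.IsHermitian)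
    {s : Finset ι} (hP : ∀ k ∈ s, (P k).IsHermitian ∧ IsIdempotentElem (P k))
    (ha : ∀ k ∈ s, 0 < a k) (h : ∑ k ∈ s, a k • (Q * P k * Q) = 0) :
    ∀ k ∈ s, Q * P k = 0 := by
  have hsq : ∀ k ∈ s, Q * P k * Q = (P k * Q)ᴴ * (P k * Q) := fun k hk => by
    rw [conjTranspose_mul, hQ.eq, (hP k hk).1.eq, ← mul_assoc, mul_assoc Q (P k) (P k),
      (hP k hk).2.eq]
  have hnonneg : ∀ k ∈ s, 0 ≤ a k • (Q * P k * Q) := fun k hk => by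
    rw [hsq k hk]
    exact ((posSemidef_conjTranspose_mul_self _).smul (ha k hk).le).nonneg
  intro k hk
  have hk0 := (sum_eq_zero_iff_of_nonneg hnonneg).mp h k hk
  rw [smul_eq_zero_iff_right (ha k hk).ne', hsq k hk, conjTranspose_mul_self_eq_zero] at hk0
  calc Q * P k = (P k * Q)ᴴ := by rw [conjTranspose_mul, hQ.eq, (hP k hk).1.eq]
    _ = 0 := by rw [hk0, conjTranspose_zero]


variable [DecidableEq n] [Fintype ι] {c : ℝ} {i : ι}

theorem weight_eq_of_forall_ne_mulVec_eq_zero (hS : ∑ k, a k • P k = c • 1)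
    (hPi : IsIdempotentElem (P i)) (hc : c ≠ 0) {x : n → 𝕜} (hx : x ≠ 0)
    (hker : ∀ k ≠ i, P k *ᵥ x = 0) : a i = c := by
  have hSx : a i • (P i *ᵥ x) = c • x :=
    calc a i • (P i *ᵥ x) = ∑ k, a k • (P k *ᵥ x) := by
          rw [Fintype.sum_eq_single i fun k hk => by rw [hker k hk, smul_zero]]
      _ = (∑ k, a k • P k) *ᵥ x := by simp only [sum_mulVec, smul_mulVec]
      _ = c • x := by rw [hS, smul_mulVec, one_mulVec]
  have hfix : P i *ᵥ x = x := by
    have h := congrArg (P i *ᵥ ·) hSx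
    rw [mulVec_smul, mulVec_mulVec, hPi.eq, hSx, mulVec_smul] at h
    exact (smul_right_injective _ hc h).symm
  rw [hfix] at hSx
  exact smul_left_injective ℝ hx hSx

theorem sum_erase_smul_mul_mul_eq_zero [DecidableEq ι] (hS : ∑ k, a k • P k = c • 1)
    (hPi : IsIdempotentElem (P i)) (hai : a i = c) :
    ∑ k ∈ univ.erase i, a k • (P i * P k * P i) = 0 := by
  have h := congrArg (P i * · * P i) hS
  simp only [mul_sum, sum_mul, mul_smul_comm, smul_mul_assoc, mul_one, hPi.eq] at h
  rw [← add_sum_erase _ _ (mem_univ i), hPi.eq, hPi.eq, hai] at h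
  simpa using h

end

theorem tight_fusion_frame_dimensional_restriction_general
    (n m : ℕ) (hn : 0 < n)
    (w : Fin m → ℝ) (hw : ∀ i, 0 < w i)
    (d : Fin m → ℕ)
    (P : Fin m → Matrix (Fin n) (Fin n) ℂ)
    (hP : ∀ i, (P i).IsHermitian ∧ P i * P i = P i)
    (hd : ∀ i, (P i).trace = (d i : ℂ))
    (htight : ∑ i, ((w i : ℂ) ^ 2) • P i
        = (1 / (n : ℂ)) • (1 : Matrix (Fin n) (Fin n) ℂ))
    (i₀ : Fin m)
    (hi₀ : ∑ k ∈ Finset.univ.erase i₀, d k ≤ n - 1) :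
    (w i₀) ^ 2 = 1 / (n : ℝ) ∧ ∀ j, j ≠ i₀ → P i₀ * P j = 0 := by
  have hS : ∑ k, (w k ^ 2) • P k = (1 / n : ℝ) • (1 : Matrix (Fin n) (Fin n) ℂ) := by
    simpa [← Complex.coe_smul] using htight
  have hrank : ∀ k, (P k).rank = d k := fun k => by
    exact_mod_cast (trace_eq_rank_of_isIdempotentElem (hP k).2).symm.trans (hd k)
  obtain ⟨x, hx0, hx⟩ := LinearMap.exists_ne_zero_forall_mem_apply_eq_zero
    (fun k => (P k).mulVecLin) (univ.erase i₀) (by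
      rw [Module.finrank_fin_fun]
      change ∑ k ∈ _, (P k).rank < n
      simp only [hrank]
      omega)
  have hw₀ : w i₀ ^ 2 = 1 / n := weight_eq_of_forall_ne_mulVec_eq_zero (a := fun k => w k ^ 2) hS
    (hP i₀).2 (by positivity) hx0 fun k hk => hx k (mem_erase.2 ⟨hk, mem_univ k⟩)
  refine ⟨hw₀, fun j hj => ?_⟩
  exact mul_eq_zero_of_sum_smul_mul_mul_eq_zero (hP i₀).1 (fun k _ => hP k)
    (fun k _ => by have := hw k; positivity) (sum_erase_smul_mul_mul_eq_zero hS (hP i₀).2 hw₀)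
    j (mem_erase.2 ⟨hj, mem_univ j⟩)

/-- Dimensional restriction on tight fusion frames: if `(w i, W i)` is a tight
fusion frame for `ℂ^n` with `S = ∑ w i ^ 2 • P i = (1/n) • I`, `dim W i = d i`,
`∑ w i ^ 2 * d i = 1`, `∑ d i ≥ n`, and for some index `i₀` we have
`∑_{k ≠ i₀} d k ≤ n - 1`, then `w i₀ ^ 2 = 1/n` and `P i₀ * P j = 0` for all
`j ≠ i₀`. -/
theorem tight_fusion_frame_dimensional_restriction
    (n m : ℕ) (hn : 0 < n)
    (w : Fin m → ℝ) (hw : ∀ i, 0 < w i)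
    (d : Fin m → ℕ)
    (P : Fin m → Matrix (Fin n) (Fin n) ℂ)
    (hP : ∀ i, (P i).IsHermitian ∧ P i * P i = P i)
    (hd : ∀ i, (P i).trace = (d i : ℂ))
    (hnorm : ∑ i, (w i) ^ 2 * (d i : ℝ) = 1)
    (hM : n ≤ ∑ i, d i)
    (htight : ∑ i, ((w i : ℂ) ^ 2) • P i
        = (1 / (n : ℂ)) • (1 : Matrix (Fin n) (Fin n) ℂ))
    (i₀ : Fin m)
    (hi₀ : ∑ k ∈ Finset.univ.erase i₀, d k ≤ n - 1) :
    (w i₀) ^ 2 = 1 / (n : ℝ) ∧ ∀ j, j ≠ i₀ → P i₀ * P j = 0 :=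
  tight_fusion_frame_dimensional_restriction_general n m hn w hw d P hP hd htight i₀ hi₀
end

section
/- There is no tight fusion frame in ℂ³ consisting of two 2-dimensional subspaces: there do not exist subspaces W₁, W₂ ⊆ ℂ³ with dim W₁ = dim W₂ = 2 and weights w₁, w₂ > 0 such that w₁² P_{W₁} + w₂² P_{W₂} = (1/3)·I₃. -/
/-!
If `w₁² P₁ + w₂² P₂ = (1/3) I` with `P₂` a projection other than the identity, then
`P₁ - (1/(3 w₁²)) I = -(w₂²/w₁²) P₂` is singular, so `1/(3 w₁²)` lies in the spectrum `{0, 1}` of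
the projection `P₁`, i.e. `w₁² = 1/3`; symmetrically `w₂² = 1/3`. Taking traces then gives
`2/3 + 2/3 = 1`.
-/

open Matrix

namespace IsIdempotentElem

variable {K A : Type*} [Field K] [Ring A] [Algebra K A]

theorem not_isUnit_smul {q : A} (hq : IsIdempotentElem q) (hq1 : q ≠ 1) (c : K) :
    ¬ IsUnit (c • q) := by
  rw [Algebra.smul_def, (Algebra.commute_algebraMap_left c q).isUnit_mul_iff]
  exact fun ⟨_, hunit⟩ => hq1 ((iff_eq_one_of_isUnit hunit).mp hq)

theorem eq_of_smul_add_smul_eq_smul_one {p q : A} (hp : IsIdempotentElem p)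
    (hq : IsIdempotentElem q) (hq1 : q ≠ 1) {a b d : K} (ha : a ≠ 0) (hd : d ≠ 0)
    (h : a • p + b • q = d • 1) : a = d := by
  have hsub : algebraMap K A (d / a) - p = (b / a) • q := by
    rw [Algebra.algebraMap_eq_smul_one, sub_eq_iff_eq_add', div_eq_inv_mul, div_eq_inv_mul,
      mul_smul, mul_smul, ← h, smul_add, inv_smul_smul₀ ha]
  have hspec : d / a ∈ spectrum K p := by
    rw [spectrum.mem_iff, hsub]
    exact hq.not_isUnit_smul hq1 _
  rcases hp.spectrum_subset K hspec with h0 | h1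
  · exact absurd h0 (div_ne_zero hd ha)
  · exact ((div_eq_one_iff_eq ha).mp h1).symm

end IsIdempotentElem

/-- There is no tight fusion frame of `ℂ³` consisting of two 2-dimensional
subspaces: there are no orthogonal projections `P₁, P₂` of rank (trace) `2` and
weights `w₁, w₂ > 0` with `w₁² P₁ + w₂² P₂ = (1/3) • I₃`. -/
theorem no_tight_fusion_frame_two_planes_in_C3 :
    ¬ ∃ (P₁ P₂ : Matrix (Fin 3) (Fin 3) ℂ) (w₁ w₂ : ℝ),
      P₁.IsHermitian ∧ P₁ * P₁ = P₁ ∧ P₁.trace = (2 : ℂ) ∧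
      P₂.IsHermitian ∧ P₂ * P₂ = P₂ ∧ P₂.trace = (2 : ℂ) ∧
      0 < w₁ ∧ 0 < w₂ ∧
      ((w₁ : ℂ) ^ 2) • P₁ + ((w₂ : ℂ) ^ 2) • P₂
        = (1 / 3 : ℂ) • (1 : Matrix (Fin 3) (Fin 3) ℂ) := by
  rintro ⟨P₁, P₂, w₁, w₂, -, hP₁, hP₁t, -, hP₂, hP₂t, hw₁, hw₂, h⟩
  have ne_one : ∀ P : Matrix (Fin 3) (Fin 3) ℂ, P.trace = 2 → P ≠ 1 := by
    rintro P hP rfl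
    norm_num [trace_one] at hP
  have sq_ne_zero : ∀ w : ℝ, 0 < w → (w : ℂ) ^ 2 ≠ 0 := fun w hw =>
    pow_ne_zero 2 (Complex.ofReal_ne_zero.mpr hw.ne')
  have h₁ : (w₁ : ℂ) ^ 2 = 1 / 3 := IsIdempotentElem.eq_of_smul_add_smul_eq_smul_one
    hP₁ hP₂ (ne_one P₂ hP₂t) (sq_ne_zero w₁ hw₁) (by norm_num) h
  have h₂ : (w₂ : ℂ) ^ 2 = 1 / 3 := IsIdempotentElem.eq_of_smul_add_smul_eq_smul_one
    hP₂ hP₁ (ne_one P₁ hP₁t) (sq_ne_zero w₂ hw₂) (by norm_num) ((add_comm _ _).trans h)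
  have htrace := congrArg trace h
  rw [trace_add, trace_smul, trace_smul, trace_smul, trace_one, hP₁t, hP₂t, h₁, h₂] at htrace
  norm_num at htrace
end

section
/- Let (w_i, W_i)_{i=1}^m be a Bessel sequence of subspaces of ℂ^n with Σ_i w_i² dim(W_i) ≥ 1, S = Σ_i w_i² P_{W_i}, and P_q = Σ_{i,j} w_i² w_j² P_{W_j} P_{W_i} P_{W_j}. Then (1/n²)·I_n is submajorized by P_q, i.e., λ((1/n²)I_n) ≺_w λ(P_q). -/
open Matrix

/-- `x` is submajorized by `y` (`x ≺_w y`). -/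
def Submajorized {n : ℕ} (x y : Fin n → ℝ) : Prop :=
  ∀ s : Finset (Fin n), ∃ t : Finset (Fin n),
    t.card = s.card ∧ ∑ i ∈ s, x i ≤ ∑ i ∈ t, y i

/-!
Since `P_j` is idempotent, `tr (P_j P_i P_j) = tr (P_i P_j)`, so `tr P_q = tr S²`. Cauchy–Schwarz
on the eigenvalues of `S` gives `n · tr S² ≥ (tr S)² = (∑ w_i² d_i)² ≥ 1`, hence the eigenvalues
of `P_q` sum to at least `1/n`. Any `k` largest of them sum to at least `k/n` of the total, that is
to at least `k/n²`.
-/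

open Finset in
theorem Finset.exists_card_eq_forall_notMem_le {ι α : Type*} [Fintype ι] [DecidableEq ι]
    [LinearOrder α] (f : ι → α) {k : ℕ} (hk : k ≤ Fintype.card ι) :
    ∃ t : Finset ι, #t = k ∧ ∀ i ∈ t, ∀ j ∉ t, f j ≤ f i := by
  induction k with
  | zero => exact ⟨∅, rfl, by simp⟩
  | succ k ih =>
    obtain ⟨t, htk, ht⟩ := ih (by omega)
    have hne : tᶜ.Nonempty := by rw [← card_pos, card_compl]; omega
    obtain ⟨j, hj, hmax⟩ := tᶜ.exists_max_image f hne
    refine ⟨insert j t, by rw [card_insert_of_notMem (mem_compl.1 hj), htk], ?_⟩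
    intro i hi l hl
    rw [mem_insert, not_or] at hl
    rcases mem_insert.1 hi with rfl | hi
    exacts [hmax l (mem_compl.2 hl.2), ht i hi l hl.2]

open Finset in
theorem Finset.card_nsmul_sum_le_card_nsmul_sum_of_forall_notMem_le {ι M : Type*} [Fintype ι]
    [DecidableEq ι] [AddCommMonoid M] [PartialOrder M] [IsOrderedAddMonoid M] (f : ι → M)
    (t : Finset ι) (ht : ∀ i ∈ t, ∀ j ∉ t, f j ≤ f i) :
    #t • ∑ i, f i ≤ Fintype.card ι • ∑ i ∈ t, f i := by
  have hcross : #t • ∑ j ∈ tᶜ, f j ≤ #tᶜ • ∑ i ∈ t, f i := by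
    calc #t • ∑ j ∈ tᶜ, f j = ∑ _i ∈ t, ∑ j ∈ tᶜ, f j := by rw [sum_const]
      _ ≤ ∑ i ∈ t, ∑ _j ∈ tᶜ, f i :=
        sum_le_sum fun i hi => sum_le_sum fun j hj => ht i hi j (mem_compl.1 hj)
      _ = #tᶜ • ∑ i ∈ t, f i := by rw [smul_sum]; simp only [sum_const]
  calc #t • ∑ i, f i = #t • ∑ i ∈ t, f i + #t • ∑ j ∈ tᶜ, f j := by
        rw [← sum_add_sum_compl t f, smul_add]
    _ ≤ #t • ∑ i ∈ t, f i + #tᶜ • ∑ i ∈ t, f i := by gcongr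
    _ = Fintype.card ι • ∑ i ∈ t, f i := by rw [← add_smul, card_add_card_compl]

theorem submajorized_const_of_mul_le_sum {n : ℕ} {c : ℝ} {y : Fin n → ℝ}
    (h : n * c ≤ ∑ i, y i) : Submajorized (fun _ => c) y := by
  intro s
  obtain ⟨t, hts, ht⟩ := Finset.exists_card_eq_forall_notMem_le y (k := s.card)
    (by simpa using s.card_le_univ)
  refine ⟨t, hts, ?_⟩
  have hmean := Finset.card_nsmul_sum_le_card_nsmul_sum_of_forall_notMem_le y t ht
  simp only [nsmul_eq_mul, Fintype.card_fin, hts] at hmean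
  rcases Nat.eq_zero_or_pos n with rfl | hn
  · simp [Finset.eq_empty_of_isEmpty]
  refine le_of_mul_le_mul_left ?_ (Nat.cast_pos.2 hn)
  calc (n : ℝ) * ∑ _i ∈ s, c = s.card * (n * c) := by rw [Finset.sum_const, nsmul_eq_mul]; ring
    _ ≤ s.card * ∑ i, y i := by gcongr
    _ ≤ n * ∑ i ∈ t, y i := hmean

theorem Matrix.trace_mul_mul_of_isIdempotentElem {n R : Type*} [Fintype n] [CommSemiring R]
    {P : Matrix n n R} (hP : IsIdempotentElem P) (Q : Matrix n n R) :
    (P * Q * P).trace = (P * Q).trace := by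
  rw [trace_mul_cycle, hP.eq, trace_mul_comm]

theorem Matrix.trace_sum_sum_smul_mul_mul_eq_trace_mul_self {ι n R : Type*} [Fintype ι]
    [Fintype n] [CommSemiring R] (c : ι → R) {P : ι → Matrix n n R}
    (hP : ∀ i, IsIdempotentElem (P i)) :
    (∑ i, ∑ j, (c i * c j) • (P j * P i * P j)).trace =
      ((∑ i, c i • P i) * ∑ i, c i • P i).trace := by
  rw [Finset.sum_mul_sum, trace_sum, trace_sum]
  refine Finset.sum_congr rfl fun i _ => ?_
  rw [trace_sum, trace_sum]
  refine Finset.sum_congr rfl fun j _ => ?_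
  rw [smul_mul_smul_comm, trace_smul, trace_smul, trace_mul_mul_of_isIdempotentElem (hP j),
    trace_mul_comm]

theorem Matrix.IsHermitian.trace_mul_self {n 𝕜 : Type*} [Fintype n] [DecidableEq n] [RCLike 𝕜]
    {A : Matrix n n 𝕜} (hA : A.IsHermitian) :
    (A * A).trace = ∑ i, (hA.eigenvalues i : 𝕜) ^ 2 := by
  conv_lhs => rw [hA.spectral_theorem, ← map_mul, Unitary.conjStarAlgAut_apply, trace_mul_cycle,
    Unitary.coe_star_mul_self, one_mul, diagonal_mul_diagonal, trace_diagonal]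
  simp [sq]

theorem Matrix.IsHermitian.re_trace_sq_le_card_mul_re_trace_mul_self {n 𝕜 : Type*} [Fintype n]
    [RCLike 𝕜] {A : Matrix n n 𝕜} (hA : A.IsHermitian) :
    RCLike.re A.trace ^ 2 ≤ Fintype.card n * RCLike.re (A * A).trace := by
  classical
  simpa [hA.trace_eq_sum_eigenvalues, hA.trace_mul_self] using
    sq_sum_le_card_mul_sum_sq (s := Finset.univ) (f := hA.eigenvalues)

theorem scaled_identity_submajorized_by_q_potential_general
    (n m : ℕ)
    (w : Fin m → ℝ)
    (d : Fin m → ℕ)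
    (P : Fin m → Matrix (Fin n) (Fin n) ℂ)
    (hP : ∀ i, (P i).IsHermitian ∧ P i * P i = P i)
    (hd : ∀ i, (P i).trace = (d i : ℂ))
    (htr : (1 : ℝ) ≤ ∑ i, (w i) ^ 2 * (d i : ℝ))
    (Pq : Matrix (Fin n) (Fin n) ℂ)
    (hPq : Pq = ∑ i, ∑ j, (((w i : ℂ) ^ 2) * ((w j : ℂ) ^ 2)) • (P j * P i * P j))
    (hq : Pq.IsHermitian) :
    Submajorized (fun _ => 1 / (n : ℝ) ^ 2) hq.eigenvalues := by
  set S := ∑ i, ((w i : ℂ) ^ 2) • P i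
  have hS : S.IsHermitian :=
    isSelfAdjoint_sum _ fun i _ => (hP i).1.smul (by simp [IsSelfAdjoint, ← Complex.ofReal_pow])
  have htrS : (S.trace).re = ∑ i, w i ^ 2 * d i := by
    simp [S, trace_sum, hd, ← Complex.ofReal_pow]
  have htrPq : Pq.trace = (S * S).trace :=
    hPq ▸ trace_sum_sum_smul_mul_mul_eq_trace_mul_self _ fun i => (hP i).2
  have hsum : ∑ i, hq.eigenvalues i = (Pq.trace).re := by
    simp [hq.trace_eq_sum_eigenvalues]
  have hpot : 1 ≤ n * ∑ i, hq.eigenvalues i := by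
    calc (1 : ℝ) ≤ (S.trace).re ^ 2 := one_le_pow₀ (htrS ▸ htr)
      _ ≤ n * (S * S).trace.re := by simpa using hS.re_trace_sq_le_card_mul_re_trace_mul_self
      _ = n * ∑ i, hq.eigenvalues i := by rw [hsum, htrPq]
  have hn : (0 : ℝ) < n := Nat.cast_pos.2 (Nat.pos_of_ne_zero fun h => by norm_num [h] at hpot)
  apply submajorized_const_of_mul_le_sum
  calc (n : ℝ) * (1 / n ^ 2) = 1 / n := by field_simp
    _ ≤ ∑ i, hq.eigenvalues i := by rwa [div_le_iff₀' hn]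

/-- For a Bessel sequence of subspaces with `∑ w i ^ 2 * dim W i ≥ 1`, the
matrix `P_q = ∑_{i,j} w i² w j² P_j P_i P_j` submajorizes `(1/n²) • I`, i.e.
the constant vector `1/n²` is submajorized by the eigenvalue vector of `P_q`. -/
theorem scaled_identity_submajorized_by_q_potential
    (n m : ℕ) (hn : 0 < n)
    (w : Fin m → ℝ) (hw : ∀ i, 0 < w i)
    (d : Fin m → ℕ)
    (P : Fin m → Matrix (Fin n) (Fin n) ℂ)
    (hP : ∀ i, (P i).IsHermitian ∧ P i * P i = P i)
    (hd : ∀ i, (P i).trace = (d i : ℂ))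
    (htr : (1 : ℝ) ≤ ∑ i, (w i) ^ 2 * (d i : ℝ))
    (Pq : Matrix (Fin n) (Fin n) ℂ)
    (hPq : Pq = ∑ i, ∑ j, (((w i : ℂ) ^ 2) * ((w j : ℂ) ^ 2)) • (P j * P i * P j))
    (hq : Pq.IsHermitian) :
    Submajorized (fun _ => 1 / (n : ℝ) ^ 2) hq.eigenvalues :=
  scaled_identity_submajorized_by_q_potential_general n m w d P hP hd htr Pq hPq hq
end

section
/- Let P₁,...,P_m be orthogonal projections on ℂ^n, w ∈ ℝ_{>0}^m, and let Ψ : U(n)^m → {A ∈ M_n(ℂ) Hermitian : tr A = Σ_j w_j² tr P_j} be Ψ(U₁,...,U_m) = Σ_j w_j² U_j* P_j U_j. The differential of Ψ at (I_n,...,I_n), given by (X₁,...,X_m) ↦ Σ_j w_j² [X_j, P_j] on m-tuples of anti-Hermitian matrices, is surjective onto the trace-zero Hermitian matrices if and only if the commutant {P_j : j ∈ I_m}' equals ℂ·I_n. -/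
/-!
By `tr(Y [X, P]) = tr([P, Y] X)`, the map `X ↦ ∑ j, w_j² [X_j, P_j]` on anti-Hermitian tuples
is, for the real Frobenius pairing `Re tr(Aᴴ B)`, adjoint up to sign to `Y ↦ (w_j² [P_j, Y])_j`.
For Hermitian `Y` the commutator `[P_j, Y]` is anti-Hermitian, so pairing `Y` with the image of `[P_j, Y]` placed in
slot `j` gives `-w_j² ‖[P_j, Y]‖²`: a Hermitian matrix is orthogonal to the image iff it commutes
with every `P_j`. Since the image consists of traceless Hermitian matrices, it is all of them iff
the only traceless Hermitian element of the commutant is `0`. The commutant is closed under `ᴴ`, so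
this is equivalent to it containing no nonzero traceless matrix, i.e. to it being `ℂ · 1`.
-/

open Matrix
open scoped ComplexOrder ComplexStarModule

namespace Matrix

variable {n ι : Type*}

variable (n ι) in
noncomputable def antiHermitianTuples : Submodule ℝ (ι → Matrix n n ℂ) :=
  Submodule.pi Set.univ fun _ => skewAdjoint.submodule ℝ (Matrix n n ℂ)

lemma mem_antiHermitianTuples {X : ι → Matrix n n ℂ} :
    X ∈ antiHermitianTuples n ι ↔ ∀ j, (X j)ᴴ = -X j := by
  simp [antiHermitianTuples, Submodule.mem_pi, skewAdjoint.submodule, skewAdjoint.mem_iff,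
    star_eq_conjTranspose]

variable [Fintype n]

lemma trace_mul_commutator {R : Type*} [CommRing R] (Y X P : Matrix n n R) :
    (Y * (X * P - P * X)).trace = ((P * Y - Y * P) * X).trace := by
  rw [mul_sub, sub_mul, trace_sub, trace_sub, ← Matrix.mul_assoc, trace_mul_comm _ P,
    ← Matrix.mul_assoc, ← Matrix.mul_assoc, trace_mul_comm (Y * P)]

noncomputable def frobeniusForm : LinearMap.BilinForm ℝ (Matrix n n ℂ) :=
  LinearMap.mk₂ ℝ (fun A B => (Aᴴ * B).trace.re)
    (fun A A' B => by simp [conjTranspose_add, add_mul])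
    (fun r A B => by simp [conjTranspose_smul, Matrix.smul_mul])
    (fun A B B' => by simp [mul_add])
    (fun r A B => by simp [Matrix.mul_smul])

@[simp]
lemma frobeniusForm_apply (A B : Matrix n n ℂ) : frobeniusForm A B = (Aᴴ * B).trace.re := rfl

lemma frobeniusForm_comm (A B : Matrix n n ℂ) : frobeniusForm A B = frobeniusForm B A := by
  rw [frobeniusForm_apply, ← Complex.conj_re, ← Complex.star_def, ← trace_conjTranspose,
    conjTranspose_mul, conjTranspose_conjTranspose, frobeniusForm_apply]

lemma frobeniusForm_isRefl : (frobeniusForm : LinearMap.BilinForm ℝ (Matrix n n ℂ)).IsRefl :=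
  fun A B h => by rwa [frobeniusForm_comm]

lemma frobeniusForm_self_eq_zero_iff {A : Matrix n n ℂ} : frobeniusForm A A = 0 ↔ A = 0 := by
  have hreal : ((Aᴴ * A).trace.re : ℂ) = (Aᴴ * A).trace := by
    rw [← Complex.conj_eq_iff_re, ← Complex.star_def, ← trace_conjTranspose, conjTranspose_mul,
      conjTranspose_conjTranspose]
  rw [frobeniusForm_apply, ← trace_conjTranspose_mul_self_eq_zero_iff, ← Complex.ofReal_eq_zero,
    hreal]

lemma frobeniusForm_restrict_nondegenerate (W : Submodule ℝ (Matrix n n ℂ)) :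
    (frobeniusForm.restrict W).Nondegenerate :=
  ⟨fun x hx => Subtype.ext (frobeniusForm_self_eq_zero_iff.mp (hx x)),
    fun x hx => Subtype.ext (frobeniusForm_self_eq_zero_iff.mp (hx x))⟩

lemma setOf_commute_eq_scalars_iff {K : Type*} [Field K] [CharZero K] [DecidableEq n] [Nonempty n]
    (P : ι → Matrix n n K) :
    {A : Matrix n n K | ∀ j, A * P j = P j * A} = {A | ∃ c : K, A = c • 1} ↔
      ∀ A : Matrix n n K, (∀ j, Commute A (P j)) → A.trace = 0 → A = 0 := by
  have hcard : (Fintype.card n : K) ≠ 0 := Nat.cast_ne_zero.mpr Fintype.card_ne_zero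
  have hscalar : ∀ (c : K) j, Commute (c • 1 : Matrix n n K) (P j) :=
    fun c j => (Commute.one_left _).smul_left c
  constructor
  · intro h A hA htr
    obtain ⟨c, rfl⟩ : ∃ c : K, A = c • 1 := Set.ext_iff.mp h A |>.mp hA
    rw [trace_smul, trace_one, smul_eq_mul, mul_eq_zero] at htr
    simp [htr.resolve_right hcard]
  · intro h
    ext A
    refine ⟨fun hA => ⟨A.trace / Fintype.card n, sub_eq_zero.mp ?_⟩, ?_⟩
    · refine h _ (fun j => Commute.sub_left (hA j) (hscalar _ j)) ?_
      rw [trace_sub, trace_smul, trace_one, smul_eq_mul, div_mul_cancel₀ _ hcard, sub_self]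
    · rintro ⟨c, rfl⟩ j
      exact hscalar c j

lemma forall_commute_trace_eq_zero_iff_isHermitian {P : ι → Matrix n n ℂ}
    (hP : ∀ j, (P j).IsHermitian) :
    (∀ A : Matrix n n ℂ, (∀ j, Commute A (P j)) → A.trace = 0 → A = 0) ↔
      ∀ A : Matrix n n ℂ, A.IsHermitian → (∀ j, Commute A (P j)) → A.trace = 0 → A = 0 := by
  refine ⟨fun h A _ => h A, fun h A hA htr => ?_⟩
  have hAstar : ∀ j, Commute (star A) (P j) := fun j => by
    simpa [(hP j).star_eq] using (hA j).star_star
  have htr_star : (star A).trace = 0 := by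
    rw [star_eq_conjTranspose, trace_conjTranspose, htr, star_zero]
  have hre : (ℜ A : Matrix n n ℂ) = 0 := by
    refine h _ (ℜ A).2 (fun j => ?_) ?_
    · rw [realPart_apply_coe]
      exact ((hA j).add_left (hAstar j)).smul_left _
    · rw [realPart_apply_coe, trace_smul, trace_add, htr, htr_star, add_zero, smul_zero]
  have him : (ℑ A : Matrix n n ℂ) = 0 := by
    refine h _ (ℑ A).2 (fun j => ?_) ?_
    · rw [imaginaryPart_apply_coe]
      exact (((hA j).sub_left (hAstar j)).smul_left _).smul_left _
    · rw [imaginaryPart_apply_coe, trace_smul, trace_smul, trace_sub, htr, htr_star, sub_zero,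
        smul_zero, smul_zero]
  rw [← realPart_add_I_smul_imaginaryPart A, hre, him, smul_zero, add_zero]

section commutatorMap

variable [Fintype ι] (w : ι → ℝ) (P : ι → Matrix n n ℂ)

/-- The differential of `Ψ(U₁, …, U_m) = ∑ j, w_j² U_jᴴ P_j U_j` at `(1, …, 1)`. -/
noncomputable def commutatorMap : (ι → Matrix n n ℂ) →ₗ[ℂ] Matrix n n ℂ :=
  ∑ j, ((w j : ℂ) ^ 2) •
    (LinearMap.mulRight ℂ (P j) - LinearMap.mulLeft ℂ (P j)) ∘ₗ LinearMap.proj j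

lemma commutatorMap_apply (X : ι → Matrix n n ℂ) :
    commutatorMap w P X = ∑ j, ((w j : ℂ) ^ 2) • (X j * P j - P j * X j) := by
  simp [commutatorMap]

lemma commutatorMap_single [DecidableEq ι] (j : ι) (Z : Matrix n n ℂ) :
    commutatorMap w P (Pi.single j Z) = ((w j : ℂ) ^ 2) • (Z * P j - P j * Z) := by
  rw [commutatorMap_apply, Finset.sum_eq_single j (fun k _ hk => by simp [hk]) (by simp),
    Pi.single_eq_same]

lemma trace_commutatorMap (X : ι → Matrix n n ℂ) : (commutatorMap w P X).trace = 0 := by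
  simp [commutatorMap_apply, trace_sum, trace_mul_comm (X _)]

lemma trace_mul_commutatorMap_eq_zero {Y : Matrix n n ℂ} (hY : ∀ j, Commute Y (P j))
    (X : ι → Matrix n n ℂ) : (Y * commutatorMap w P X).trace = 0 := by
  simp [commutatorMap_apply, Finset.mul_sum, trace_sum, trace_mul_commutator, (hY _).eq]

variable {w P}

lemma isHermitian_commutatorMap (hP : ∀ j, (P j).IsHermitian) {X : ι → Matrix n n ℂ}
    (hX : ∀ j, (X j)ᴴ = -X j) : (commutatorMap w P X).IsHermitian := by
  simp [IsHermitian, commutatorMap_apply, conjTranspose_sum, (hP _).eq, hX, smul_sub,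
    neg_add_eq_sub]

variable [DecidableEq ι]

lemma commute_of_mem_orthogonal (hP : ∀ j, (P j).IsHermitian) {j : ι} (hw : w j ≠ 0)
    {y : Matrix n n ℂ} (hy : y.IsHermitian)
    (hperp : y ∈ frobeniusForm.orthogonal
      ((antiHermitianTuples n ι).map ((commutatorMap w P).restrictScalars ℝ))) :
    Commute y (P j) := by
  set Z := P j * y - y * P j with hZ_def
  have hZ : Zᴴ = -Z := by
    rw [hZ_def, conjTranspose_sub, conjTranspose_mul, conjTranspose_mul, (hP j).eq, hy.eq,
      neg_sub]
  have hsingle : Pi.single j Z ∈ antiHermitianTuples n ι := by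
    refine mem_antiHermitianTuples.mpr fun k => ?_
    rcases eq_or_ne k j with rfl | hk
    · simp [hZ]
    · simp [hk]
  have hortho : frobeniusForm y (commutatorMap w P (Pi.single j Z)) = 0 :=
    frobeniusForm_isRefl _ _ (hperp _ ⟨_, hsingle, rfl⟩)
  have hpairing : frobeniusForm y (commutatorMap w P (Pi.single j Z)) =
      -(w j ^ 2 * frobeniusForm Z Z) := by
    rw [commutatorMap_single, frobeniusForm_apply, frobeniusForm_apply, hy.eq, Matrix.mul_smul,
      trace_smul, trace_mul_commutator, ← hZ_def, hZ, Matrix.neg_mul, trace_neg, smul_eq_mul,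
      ← Complex.ofReal_pow, Complex.re_ofReal_mul, Complex.neg_re, mul_neg, neg_neg]
  have hZ0 : Z = 0 := by
    rw [← frobeniusForm_self_eq_zero_iff]
    rw [hpairing, neg_eq_zero] at hortho
    exact (mul_eq_zero.mp hortho).resolve_left (pow_ne_zero 2 hw)
  exact (sub_eq_zero.mp hZ0).symm

lemma forall_exists_commutatorMap_eq_iff (hP : ∀ j, (P j).IsHermitian) (hw : ∀ j, w j ≠ 0) :
    (∀ Y : Matrix n n ℂ, Y.IsHermitian → Y.trace = 0 →
        ∃ X : ι → Matrix n n ℂ, (∀ j, (X j)ᴴ = -X j) ∧ commutatorMap w P X = Y) ↔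
      ∀ Y : Matrix n n ℂ, Y.IsHermitian → (∀ j, Commute Y (P j)) → Y.trace = 0 → Y = 0 := by
  constructor
  · intro hsurj Y hY hYP hY0
    obtain ⟨X, -, rfl⟩ := hsurj Y hY hY0
    rw [← trace_conjTranspose_mul_self_eq_zero_iff, hY.eq]
    exact trace_mul_commutatorMap_eq_zero w P hYP X
  · intro htriv Y hY hY0
    set S := (antiHermitianTuples n ι).map ((commutatorMap w P).restrictScalars ℝ)
    have hcompl := frobeniusForm.isCompl_orthogonal_of_restrict_nondegenerate
      frobeniusForm_isRefl (frobeniusForm_restrict_nondegenerate S)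
    obtain ⟨s, ⟨X, hX, rfl⟩, y, hy, rfl⟩ :=
      Submodule.mem_sup.mp (hcompl.sup_eq_top ▸ Submodule.mem_top : Y ∈ S ⊔ _)
    rw [SetLike.mem_coe, mem_antiHermitianTuples] at hX
    have hyH : y.IsHermitian := by simpa using hY.sub (isHermitian_commutatorMap (w := w) hP hX)
    have hy0 : y = 0 := by
      refine htriv y hyH (fun j => commute_of_mem_orthogonal hP (hw j) hyH hy) ?_
      rwa [trace_add, LinearMap.restrictScalars_apply, trace_commutatorMap, zero_add] at hY0
    exact ⟨X, hX, by simp [hy0]⟩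

end commutatorMap

end Matrix

/-- The differential at the identity of
`Ψ(U₁,...,U_m) = ∑ j w j ^ 2 • U_j* P_j U_j`, namely
`(X₁,...,X_m) ↦ ∑ j w j ^ 2 • [X_j, P_j]` on `m`-tuples of anti-Hermitian
matrices, is surjective onto the trace-zero Hermitian matrices iff the
commutant of `{P_j}` is `ℂ · I`. -/
theorem differential_surjective_iff_commutant_trivial
    (n m : ℕ) (hn : 0 < n)
    (w : Fin m → ℝ) (hw : ∀ j, 0 < w j)
    (P : Fin m → Matrix (Fin n) (Fin n) ℂ)
    (hP : ∀ j, (P j).IsHermitian ∧ P j * P j = P j) :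
    (∀ Y : Matrix (Fin n) (Fin n) ℂ, Y.IsHermitian → Y.trace = 0 →
        ∃ X : Fin m → Matrix (Fin n) (Fin n) ℂ,
          (∀ j, (X j)ᴴ = -(X j)) ∧
          ∑ j, ((w j : ℂ) ^ 2) • (X j * P j - P j * X j) = Y) ↔
      {A : Matrix (Fin n) (Fin n) ℂ | ∀ j, A * P j = P j * A}
        = {A | ∃ c : ℂ, A = c • (1 : Matrix (Fin n) (Fin n) ℂ)} := by
  have : Nonempty (Fin n) := Fin.pos_iff_nonempty.mp hn
  have hPH : ∀ j, (P j).IsHermitian := fun j => (hP j).1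
  simp_rw [← commutatorMap_apply]
  rw [setOf_commute_eq_scalars_iff, forall_commute_trace_eq_zero_iff_isHermitian hPH]
  exact forall_exists_commutatorMap_eq_iff hPH fun j => (hw j).ne'
end

section
/- Let D = diag(d₁,...,d_m) with all d_i > 0. Then the spectral Hadamard index I_sp(D) = min_{‖x‖=1} ‖D ∘ xx*‖_sp equals (Σ_i d_i^{-1})^{-1}, and the Frobenius Hadamard index I₂(D) = min_{‖x‖=1} ‖D ∘ xx*‖₂ equals (Σ_i d_i^{-2})^{-1/2}. -/
open Matrix

noncomputable section

/-- The Frobenius norm of a complex matrix. -/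
noncomputable def frobNorm {m : ℕ} (M : Matrix (Fin m) (Fin m) ℂ) : ℝ :=
  Real.sqrt (∑ i, ∑ j, ‖M i j‖ ^ 2)

/-- The spectral (operator) norm of a complex matrix, as the supremum of
`‖M x‖` over Euclidean unit vectors `x`. -/
noncomputable def specNorm {m : ℕ} (M : Matrix (Fin m) (Fin m) ℂ) : ℝ :=
  sSup {r : ℝ | ∃ x : Fin m → ℂ, ∑ i, ‖x i‖ ^ 2 = 1 ∧
    r = Real.sqrt (∑ i, ‖M.mulVec x i‖ ^ 2)}

/-! Since `D` is diagonal, `D ∘ x x*` is the diagonal matrix `diag (dᵢ pᵢ)` with `pᵢ = |xᵢ|²`,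
and `p` ranges over the whole standard simplex as `x` ranges over unit vectors. Its spectral
norm is `maxᵢ dᵢ pᵢ =: M`, and `1 = ∑ pᵢ ≤ M ∑ dᵢ⁻¹`, with equality when `dᵢ pᵢ` is constant.
Its Frobenius norm is `‖(dᵢ pᵢ)ᵢ‖₂`, and Cauchy–Schwarz applied to `1 = ∑ (dᵢ pᵢ) dᵢ⁻¹` gives
`1 ≤ ‖(dᵢ pᵢ)ᵢ‖₂² ∑ dᵢ⁻²`, with equality when `pᵢ ∝ dᵢ⁻²`. -/

section Simplex

variable {ι : Type*} [Fintype ι]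

theorem div_sum_mem_stdSimplex {𝕜 : Type*} [Field 𝕜] [LinearOrder 𝕜] [IsStrictOrderedRing 𝕜]
    {w : ι → 𝕜} (hw : ∀ i, 0 ≤ w i) (hS : 0 < ∑ j, w j) :
    (fun i => w i / ∑ j, w j) ∈ stdSimplex 𝕜 ι := by
  refine ⟨fun i => div_nonneg (hw i) hS.le, ?_⟩
  rw [← Finset.sum_div, div_self hS.ne']

theorem image_normSq_unitSphere :
    (fun (x : ι → ℂ) i => ‖x i‖ ^ 2) '' {x | ∑ i, ‖x i‖ ^ 2 = 1} = stdSimplex ℝ ι := by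
  ext p
  constructor
  · rintro ⟨x, hx, rfl⟩
    exact ⟨fun i => sq_nonneg _, hx⟩
  · rintro ⟨hp, hp1⟩
    have hx : ∀ i, ‖(√(p i) : ℂ)‖ ^ 2 = p i := fun i => by
      rw [Complex.norm_real, Real.norm_eq_abs, sq_abs, Real.sq_sqrt (hp i)]
    exact ⟨fun i => √(p i), (Finset.sum_congr rfl fun i _ => hx i).trans hp1, funext hx⟩

theorem setOf_unitSphere_eq_image_stdSimplex {G : (ι → ℂ) → ℝ} (F : (ι → ℝ) → ℝ)
    (hG : ∀ x, G x = F fun i => ‖x i‖ ^ 2) :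
    {r | ∃ x : ι → ℂ, ∑ i, ‖x i‖ ^ 2 = 1 ∧ r = G x} = F '' stdSimplex ℝ ι := by
  rw [← image_normSq_unitSphere, Set.image_image]
  ext r
  simp [hG, eq_comm]

variable [Nonempty ι] {d : ι → ℝ}

theorem isLeast_iSup_mul_stdSimplex (hd : ∀ i, 0 < d i) :
    IsLeast ((fun p => ⨆ i, d i * p i) '' stdSimplex ℝ ι) (∑ i, (d i)⁻¹)⁻¹ := by
  set S := ∑ i, (d i)⁻¹
  have hS : 0 < S := Finset.sum_pos (fun i _ => inv_pos.mpr (hd i)) Finset.univ_nonempty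
  refine ⟨⟨_, div_sum_mem_stdSimplex (fun i => (inv_pos.mpr (hd i)).le) hS, ?_⟩, ?_⟩
  · have hconst : ∀ i, d i * ((d i)⁻¹ / S) = S⁻¹ := fun i => by
      field_simp [(hd i).ne']
    change ⨆ i, d i * ((d i)⁻¹ / S) = S⁻¹
    simp only [hconst, ciSup_const]
  · rintro _ ⟨p, ⟨-, hp1⟩, rfl⟩
    set M := ⨆ i, d i * p i
    have hle : ∀ i, p i ≤ M * (d i)⁻¹ := fun i => by
      rw [← div_eq_mul_inv, le_div_iff₀ (hd i), mul_comm]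
      exact le_ciSup (f := fun i => d i * p i) (Set.finite_range _).bddAbove i
    have : 1 ≤ M * S := by
      calc (1 : ℝ) = ∑ i, p i := hp1.symm
        _ ≤ ∑ i, M * (d i)⁻¹ := Finset.sum_le_sum fun i _ => hle i
        _ = M * S := by rw [Finset.mul_sum]
    rwa [inv_le_iff_one_le_mul₀' hS, mul_comm]

theorem isLeast_sqrt_sum_sq_mul_stdSimplex (hd : ∀ i, 0 < d i) :
    IsLeast ((fun p => √(∑ i, (d i * p i) ^ 2)) '' stdSimplex ℝ ι) (√(∑ i, (d i ^ 2)⁻¹))⁻¹ := by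
  set T := ∑ i, (d i ^ 2)⁻¹
  have hT : 0 < T := Finset.sum_pos (fun i _ => by have := hd i; positivity) Finset.univ_nonempty
  refine ⟨⟨_, div_sum_mem_stdSimplex (fun i => by positivity) hT, ?_⟩, ?_⟩
  · have hsq : ∀ i, (d i * ((d i ^ 2)⁻¹ / T)) ^ 2 = (d i ^ 2)⁻¹ * (T ^ 2)⁻¹ := fun i => by
      field_simp [(hd i).ne']
    change √(∑ i, (d i * ((d i ^ 2)⁻¹ / T)) ^ 2) = _
    rw [Finset.sum_congr rfl fun i _ => hsq i, ← Finset.sum_mul, ← Real.sqrt_inv]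
    congr 1
    change T * (T ^ 2)⁻¹ = T⁻¹
    field_simp
  · rintro _ ⟨p, ⟨-, hp1⟩, rfl⟩
    have hCS := Finset.sum_mul_sq_le_sq_mul_sq Finset.univ (fun i => d i * p i) fun i => (d i)⁻¹
    have hdot : ∑ i, d i * p i * (d i)⁻¹ = 1 := by
      rw [← hp1]
      exact Finset.sum_congr rfl fun i _ => by field_simp [(hd i).ne']
    simp only [hdot, one_pow, inv_pow] at hCS
    rw [← Real.sqrt_inv]
    exact Real.sqrt_le_sqrt ((inv_le_iff_one_le_mul₀ hT).mpr hCS)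

end Simplex

theorem diagonal_hadamard_vecMulVec_star {ι : Type*} [DecidableEq ι] (w x : ι → ℂ) :
    diagonal w ⊙ vecMulVec x (star x) = diagonal fun i => w i * (‖x i‖ ^ 2 : ℝ) := by
  rw [diagonal_hadamard]
  congr 1
  ext i
  simp [Complex.mul_conj, Complex.normSq_eq_norm_sq]

theorem frobNorm_diagonal {m : ℕ} (t : Fin m → ℂ) :
    frobNorm (diagonal t) = √(∑ i, ‖t i‖ ^ 2) := by
  unfold frobNorm
  congr 1
  refine Finset.sum_congr rfl fun i _ => ?_
  rw [Finset.sum_eq_single i (fun j _ hj => by simp [Ne.symm hj]) (by simp)]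
  simp

theorem specNorm_diagonal {m : ℕ} [Nonempty (Fin m)] (t : Fin m → ℂ) :
    specNorm (diagonal t) = ⨆ i, ‖t i‖ := by
  unfold specNorm
  rw [setOf_unitSphere_eq_image_stdSimplex (fun p => √(∑ i, ‖t i‖ ^ 2 * p i))
    fun x => by simp [mulVec_diagonal, mul_pow]]
  have hbdd : BddAbove (Set.range fun i => ‖t i‖) := (Set.finite_range _).bddAbove
  refine IsGreatest.csSup_eq ⟨?_, ?_⟩
  · obtain ⟨j, hj⟩ := exists_eq_ciSup_of_finite (f := fun i => ‖t i‖)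
    refine ⟨Pi.single j 1, single_mem_stdSimplex ℝ j, ?_⟩
    simp [Pi.single_apply, ← hj]
  · rintro _ ⟨p, ⟨hp, hp1⟩, rfl⟩
    set M := ⨆ i, ‖t i‖
    have hM : 0 ≤ M := (norm_nonneg _).trans (le_ciSup hbdd (Classical.arbitrary _))
    calc √(∑ i, ‖t i‖ ^ 2 * p i) ≤ √(∑ i, M ^ 2 * p i) :=
          Real.sqrt_le_sqrt <| Finset.sum_le_sum fun i _ => mul_le_mul_of_nonneg_right
            (pow_le_pow_left₀ (norm_nonneg _) (le_ciSup hbdd i) 2) (hp i)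
      _ = M := by rw [← Finset.mul_sum, hp1, mul_one, Real.sqrt_sq hM]

/-- Hadamard indexes of a positive diagonal matrix `D = diag (d₁, …, d_m)`:
the spectral index `min_{‖x‖=1} ‖D ∘ x x*‖_sp` equals `(∑ dᵢ⁻¹)⁻¹` and the
Frobenius index `min_{‖x‖=1} ‖D ∘ x x*‖₂` equals `(∑ dᵢ⁻²)^{-1/2}`. -/
theorem hadamard_index_diagonal
    (m : ℕ) (hm : 0 < m) (d : Fin m → ℝ) (hd : ∀ i, 0 < d i)
    (D : Matrix (Fin m) (Fin m) ℂ)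
    (hD : D = Matrix.diagonal fun i => (d i : ℂ)) :
    IsLeast {r : ℝ | ∃ x : Fin m → ℂ, ∑ i, ‖x i‖ ^ 2 = 1 ∧
        r = specNorm (D.hadamard (vecMulVec x (star x)))}
      ((∑ i, (d i)⁻¹)⁻¹) ∧
    IsLeast {r : ℝ | ∃ x : Fin m → ℂ, ∑ i, ‖x i‖ ^ 2 = 1 ∧
        r = frobNorm (D.hadamard (vecMulVec x (star x)))}
      ((Real.sqrt (∑ i, ((d i) ^ 2)⁻¹))⁻¹) := by
  subst hD
  have : Nonempty (Fin m) := Fin.pos_iff_nonempty.mp hm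
  have hentry (x : Fin m → ℂ) (i : Fin m) :
      ‖(d i : ℂ) * ((‖x i‖ ^ 2 : ℝ) : ℂ)‖ = d i * ‖x i‖ ^ 2 := by
    rw [← Complex.ofReal_mul, Complex.norm_real, Real.norm_of_nonneg (by have := hd i; positivity)]
  constructor
  · rw [setOf_unitSphere_eq_image_stdSimplex (fun p => ⨆ i, d i * p i) fun x => by
      rw [diagonal_hadamard_vecMulVec_star, specNorm_diagonal]; simp only [hentry]]
    exact isLeast_iSup_mul_stdSimplex hd
  · rw [setOf_unitSphere_eq_image_stdSimplex (fun p => √(∑ i, (d i * p i) ^ 2)) fun x => by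
      rw [diagonal_hadamard_vecMulVec_star, frobNorm_diagonal]; simp only [hentry]]
    exact isLeast_sqrt_sum_sq_mul_stdSimplex hd

end
end
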